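/- arXiv:1204.3655 — 6 statements merged into one kernel-verified Lean document; each statement's English description precedes it below -/
import Mathlib

section
/- Commuting property of projections: for any φ ∈ H¹(Ω) and any element T of the partition, ∇_w(Q_h φ) = 𝕼_h(∇φ) on T, where Q_h φ = {Q_0 φ, Q_b φ} with Q_0 the L² projection onto P_k(T), Q_b the L² projection onto P_k(e) on each face e ⊂ ∂T, 𝕼_h the L² projection onto [P_{k-1}(T)]^d, and ∇_w the discrete weak gradient of order k-1. -/
local notation "⟪" x ", " y "⟫" => @inner ℝ _ _ x y

namespace Submodule

variable {𝕜 E : Type*} [RCLike 𝕜] [NormedAddCommGroup E] [InnerProductSpace 𝕜 E]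
  {K : Submodule 𝕜 E} [K.HasOrthogonalProjection]

theorem inner_orthogonalProjectionOnto_left_of_mem (v : E) {u : E} (hu : u ∈ K) :
    inner 𝕜 (K.orthogonalProjectionOnto v : E) u = inner 𝕜 v u :=
  K.inner_orthogonalProjectionOnto_eq_of_mem_right ⟨u, hu⟩ v

theorem eq_orthogonalProjectionOnto_of_mem_of_inner_eq {v w : E} (hw : w ∈ K)
    (h : ∀ u ∈ K, inner 𝕜 w u = inner 𝕜 v u) : w = K.orthogonalProjectionOnto v := by
  rw [← K.starProjection_apply]
  refine (K.eq_starProjection_of_mem_of_inner_eq_zero hw fun u hu => ?_).symm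
  rw [inner_sub_left, h u hu, sub_self]

end Submodule

/-- Commuting property of projections: for `φ ∈ H¹(Ω)` and an element
`T` of the partition, `∇_w (Q_h φ) = 𝕼_h (∇φ)` on `T`.

Here, on the element `T`: `L2` models `L²(T)`, `Bd` models `L²(∂T)`, `L2d` models
`[L²(T)]^d`; `Pk ⊆ L2` is `P_k(T)`, `PkB ⊆ Bd` is the space of piecewise `P_k`
polynomials on the faces of `∂T`, and `G ⊆ L2d` is the gradient space
`[P_{k-1}(T)]^d`.  `dvg` and `ntr` are the divergence `q ↦ ∇·q` and normal trace
`q ↦ q·n`; on `G` these land in `P_k(T)` and the piecewise-`P_k` boundary space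
(`hdvg`, `hntr`).  `Q_0, Q_b, 𝕼_h` are the orthogonal (`L²`) projections onto
`Pk`, `PkB`, `G`.  `φ0 = φ|_T`, `φb = φ|_{∂T}`, `gradφ = ∇φ`, and `hibp` is the
integration-by-parts identity for `φ ∈ H¹(T)`.  If `w ∈ G` is the discrete weak
gradient of `Q_h φ = {Q_0 φ, Q_b φ}` (characterized by `hw`), then
`w = 𝕼_h (∇φ)`. -/
theorem weak_gradient_commutes_with_projection
    {L2 L2d Bd : Type*}
    [NormedAddCommGroup L2] [InnerProductSpace ℝ L2]
    [NormedAddCommGroup L2d] [InnerProductSpace ℝ L2d]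
    [NormedAddCommGroup Bd] [InnerProductSpace ℝ Bd]
    (Pk : Submodule ℝ L2) (PkB : Submodule ℝ Bd) (G : Submodule ℝ L2d)
    [Submodule.HasOrthogonalProjection Pk] [Submodule.HasOrthogonalProjection PkB]
    [Submodule.HasOrthogonalProjection G]
    (dvg : L2d →ₗ[ℝ] L2) (ntr : L2d →ₗ[ℝ] Bd)
    (hdvg : ∀ q ∈ G, dvg q ∈ Pk) (hntr : ∀ q ∈ G, ntr q ∈ PkB)
    (φ0 : L2) (φb : Bd) (gradφ : L2d)
    (hibp : ∀ q ∈ G, ⟪gradφ, q⟫ = -⟪φ0, dvg q⟫ + ⟪φb, ntr q⟫)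
    (w : L2d) (hwG : w ∈ G)
    (hw : ∀ q ∈ G, ⟪w, q⟫ =
      -⟪(Pk.orthogonalProjectionOnto φ0 : L2), dvg q⟫
        + ⟪(PkB.orthogonalProjectionOnto φb : Bd), ntr q⟫) :
    w = (G.orthogonalProjectionOnto gradφ : L2d) := by
  refine G.eq_orthogonalProjectionOnto_of_mem_of_inner_eq hwG fun q hq => ?_
  rw [hw q hq, Pk.inner_orthogonalProjectionOnto_left_of_mem φ0 (hdvg q hq),
    PkB.inner_orthogonalProjectionOnto_left_of_mem φb (hntr q hq), hibp q hq]
end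

section
/- If a weak finite element function v = {v_0, v_b} on an element T satisfies ∇_w v = 0 (with ∇_w the discrete weak gradient into [P_{k-1}(T)]^d) and v_0 = v_b on ∂T, then v_0 is constant on T. Consequently, a function in the global space V_h^0 with ∇_w v = 0 on every element and v_0 = v_b on every element boundary, and v_b = 0 on ∂Ω, must be identically zero on a connected domain Ω. -/
local notation "⟪" x ", " y "⟫" => @inner ℝ _ _ x y

/-- Rigidity of the discrete weak gradient.  Locally: if a weak
finite element function `v = {v₀, v_b}` on an element `T` satisfies `∇_w v = 0`
(discrete weak gradient into `[P_{k-1}(T)]^d`) and `v₀ = v_b` on `∂T`, then `v₀`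
is constant on `T`.  Globally: a function in `V_h^0` with `∇_w v = 0` on every
element, `v₀ = v_b` on every element boundary, `v_b` single-valued on interior
faces and `v_b = 0` on `∂Ω`, must vanish identically when `Ω` is connected.

Modeling: `ι` indexes the elements; on element `i`, `L2 i, L2d i, Bd i` model
`L²(T_i), [L²(T_i)]^d, L²(∂T_i)`; `Pk i` is `P_k(T_i)`; `G i` is `[P_{k-1}(T_i)]^d`;
`dvg, ntr` are divergence and normal trace; `grad` is the classical gradient and
`tr` the boundary trace (on polynomials); `one i` is the constant function `1` on
`T_i`.  `hker` says the kernel of the gradient on the (connected) element consists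
of constants; `hgradG` that `∇ P_k ⊆ [P_{k-1}]^d`; `hibp` is elementwise
integration by parts.  `F` indexes interior faces with the two adjacent elements
`elt f true, elt f false` and restriction maps `res` to the face space `FS f`
(`oneF` the trace of the constant `1`); `Fb` indexes boundary faces.  `hsingle`
is single-valuedness of `v_b`, `hbzero` is `v_b = 0` on `∂Ω`, and `hconn` is the
connectivity of `Ω` (every element is linked through interior faces to an element
touching `∂Ω`). -/
theorem weak_gradient_rigidity
    {ι : Type*} [Fintype ι]
    {L2 : ι → Type*} [∀ i, NormedAddCommGroup (L2 i)] [∀ i, InnerProductSpace ℝ (L2 i)]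
    {L2d : ι → Type*} [∀ i, NormedAddCommGroup (L2d i)] [∀ i, InnerProductSpace ℝ (L2d i)]
    {Bd : ι → Type*} [∀ i, NormedAddCommGroup (Bd i)] [∀ i, InnerProductSpace ℝ (Bd i)]
    (Pk : ∀ i, Submodule ℝ (L2 i)) (G : ∀ i, Submodule ℝ (L2d i))
    (dvg : ∀ i, L2d i →ₗ[ℝ] L2 i) (ntr : ∀ i, L2d i →ₗ[ℝ] Bd i)
    (grad : ∀ i, L2 i →ₗ[ℝ] L2d i) (tr : ∀ i, L2 i →ₗ[ℝ] Bd i)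
    (one : ∀ i, L2 i)
    (hker : ∀ i, ∀ w ∈ Pk i, grad i w = 0 → ∃ c : ℝ, w = c • one i)
    (hgradG : ∀ i, ∀ w ∈ Pk i, grad i w ∈ G i)
    (hibp : ∀ i, ∀ w ∈ Pk i, ∀ q ∈ G i,
      ⟪grad i w, q⟫ = -⟪w, dvg i q⟫ + ⟪tr i w, ntr i q⟫)
    (v0 : ∀ i, L2 i) (hv0 : ∀ i, v0 i ∈ Pk i) (vb : ∀ i, Bd i)
    (hwg : ∀ i, ∀ q ∈ G i, (-⟪v0 i, dvg i q⟫ + ⟪vb i, ntr i q⟫ : ℝ) = 0)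
    (htrv : ∀ i, tr i (v0 i) = vb i)
    {F : Type*} (elt : F → Bool → ι)
    {FS : F → Type*} [∀ f, NormedAddCommGroup (FS f)] [∀ f, InnerProductSpace ℝ (FS f)]
    (res : ∀ f b, Bd (elt f b) →ₗ[ℝ] FS f)
    (oneF : ∀ f, FS f) (honeF : ∀ f, oneF f ≠ 0)
    (hresone : ∀ f b, res f b (tr (elt f b) (one (elt f b))) = oneF f)
    (hsingle : ∀ f, res f true (vb (elt f true)) = res f false (vb (elt f false)))
    {Fb : Type*} (belt : Fb → ι)
    {BS : Fb → Type*} [∀ f, NormedAddCommGroup (BS f)] [∀ f, InnerProductSpace ℝ (BS f)]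
    (bres : ∀ f, Bd (belt f) →ₗ[ℝ] BS f)
    (boneF : ∀ f, BS f) (hboneF : ∀ f, boneF f ≠ 0)
    (hbresone : ∀ f, bres f (tr (belt f) (one (belt f))) = boneF f)
    (hbzero : ∀ f, bres f (vb (belt f)) = 0)
    (hconn : ∀ i : ι, ∃ j : ι, (∃ f : Fb, belt f = j) ∧
      Relation.ReflTransGen
        (fun i₁ i₂ => ∃ f : F, ({elt f true, elt f false} : Set ι) = {i₁, i₂}) i j) :
    (∀ i, ∃ c : ℝ, v0 i = c • one i) ∧ (∀ i, v0 i = 0 ∧ vb i = 0) := by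
  -- Step 1: grad v0 = 0 on each element
  have hgrad0 : ∀ i, grad i (v0 i) = 0 := by
    intro i
    have hq := hgradG i _ (hv0 i)
    have h1 := hibp i _ (hv0 i) _ hq
    rw [htrv i, hwg i _ hq] at h1
    exact inner_self_eq_zero.mp h1
  choose c hc using fun i => hker i _ (hv0 i) (hgrad0 i)
  have hvb : ∀ i, vb i = c i • tr i (one i) := by
    intro i; rw [← htrv i, hc i, map_smul]
  -- equality of constants across an interior face
  have hface : ∀ f : F, c (elt f true) = c (elt f false) := by
    intro f
    have h := hsingle f
    rw [hvb, hvb, map_smul, map_smul, hresone, hresone] at h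
    have h2 : (c (elt f true) - c (elt f false)) • oneF f = 0 := by
      rw [sub_smul, h, sub_self]
    rcases smul_eq_zero.mp h2 with h' | h'
    · linarith [sub_eq_zero.mp h']
    · exact absurd h' (honeF f)
  -- equality of constants along the adjacency relation
  have hstep : ∀ i₁ i₂, (∃ f : F, ({elt f true, elt f false} : Set ι) = {i₁, i₂}) →
      c i₁ = c i₂ := by
    rintro i₁ i₂ ⟨f, hf⟩
    have h1 : i₁ ∈ ({elt f true, elt f false} : Set ι) := by rw [hf]; left; rfl
    have h2 : i₂ ∈ ({elt f true, elt f false} : Set ι) := by rw [hf]; right; rfl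
    simp only [Set.mem_insert_iff, Set.mem_singleton_iff] at h1 h2
    rcases h1 with h1 | h1 <;> rcases h2 with h2 | h2 <;> subst h1 <;> subst h2
    · rfl
    · exact hface f
    · exact (hface f).symm
    · rfl
  -- constants vanish on boundary elements
  have hbd : ∀ f : Fb, c (belt f) = 0 := by
    intro f
    have h := hbzero f
    rw [hvb, map_smul, hbresone] at h
    rcases smul_eq_zero.mp h with h' | h'
    · exact h'
    · exact absurd h' (hboneF f)
  -- all constants vanish
  have htrans : ∀ i j, Relation.ReflTransGen
      (fun i₁ i₂ => ∃ f : F, ({elt f true, elt f false} : Set ι) = {i₁, i₂}) i j →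
      c i = c j := by
    intro i j h
    induction h with
    | refl => rfl
    | tail _ hstep' ih => exact ih.trans (hstep _ _ hstep')
  have hczero : ∀ i, c i = 0 := by
    intro i
    obtain ⟨j, ⟨f, hf⟩, hrel⟩ := hconn i
    rw [htrans i j hrel, ← hf]; exact hbd f
  refine ⟨fun i => ⟨c i, hc i⟩, fun i => ?_⟩
  have h0 : v0 i = 0 := by rw [hc i, hczero i, zero_smul]
  exact ⟨h0, by rw [← htrv i, h0, map_zero]⟩
end

section
/- Uniqueness of the linearized WG solution: for any fixed φ ∈ V_h, if u_h ∈ V_h^0 satisfies 𝔞_s(φ; u_h, v) = 0 for all v ∈ V_h^0, then u_h = 0. Here 𝔞_s(φ; v, w) = Σ_T (a(x,φ,∇_w φ) ∇_w v, ∇_w w)_T + ρ Σ_T h_T^{-1} ⟨v_0 - v_b, w_0 - w_b⟩_{∂T} with ρ > 0 and a uniformly positive definite. -/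
local notation "⟪" x ", " y "⟫" => @inner ℝ _ _ x y

/-- Uniqueness of the linearized WG solution: for fixed `φ ∈ V_h`,
if `u_h ∈ V_h^0` satisfies `𝔞_s(φ; u_h, v) = 0` for all `v ∈ V_h^0`, then `u_h = 0`,
where `𝔞_s(φ; v, w) = Σ_T (a(x,φ,∇_wφ) ∇_w v, ∇_w w)_T
+ ρ Σ_T h_T^{-1} ⟨v₀ - v_b, w₀ - w_b⟩_{∂T}` with `ρ > 0` and `a` uniformly
positive definite.

Modeling: `ι` indexes the elements of the partition `T_h`; `V` is the space
`V_h^0`; `gradw i v` is the discrete weak gradient `∇_w v` on `T_i` (valued in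
`[P_{k-1}(T_i)]^d ≅ G i`) and `jump i v` is the boundary difference
`(v₀ - v_b)|_{∂T_i}`; `h_T i` are the element diameters; `A i` is multiplication
by the frozen coefficient `a(x,φ,∇_wφ)` on `T_i`, uniformly elliptic (`hell`,
reflecting `ξᵗaξ ≥ λ|ξ|²`).  `hrigid` is the rigidity result for the discrete
weak gradient on the connected domain `Ω`: if `∇_w v = 0` and `v₀ = v_b` on every
element (and `v_b = 0` on `∂Ω`, built into `V_h^0`), then `v = 0`. -/
theorem linearized_WG_uniqueness
    {ι : Type*} [Fintype ι]
    {G : ι → Type*} [∀ i, NormedAddCommGroup (G i)] [∀ i, InnerProductSpace ℝ (G i)]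
    {B : ι → Type*} [∀ i, NormedAddCommGroup (B i)] [∀ i, InnerProductSpace ℝ (B i)]
    {V : Type*} [AddCommGroup V] [Module ℝ V]
    (gradw : ∀ i, V →ₗ[ℝ] G i) (jump : ∀ i, V →ₗ[ℝ] B i)
    (hT : ι → ℝ) (hTpos : ∀ i, 0 < hT i)
    (ρ : ℝ) (hρ : 0 < ρ)
    (A : ∀ i, G i →ₗ[ℝ] G i) (lam : ℝ) (hlam : 0 < lam)
    (hell : ∀ i (x : G i), lam * ‖x‖ ^ 2 ≤ ⟪A i x, x⟫)
    (hrigid : ∀ v : V, (∀ i, gradw i v = 0) → (∀ i, jump i v = 0) → v = 0)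
    (u : V)
    (hu : ∀ v : V,
      (∑ i, ⟪A i (gradw i u), gradw i v⟫)
        + ρ * ∑ i, (hT i)⁻¹ * ⟪jump i u, jump i v⟫ = 0) :
    u = 0 := by
  have key := hu u
  have h1 : ∀ i, (0:ℝ) ≤ ⟪A i (gradw i u), gradw i u⟫ := fun i =>
    le_trans (by positivity) (hell i _)
  have h2 : ∀ i, (0:ℝ) ≤ (hT i)⁻¹ * ⟪jump i u, jump i u⟫ := fun i =>
    mul_nonneg (inv_nonneg.2 (hTpos i).le) (real_inner_self_nonneg)
  have hs1 : (0:ℝ) ≤ ∑ i, ⟪A i (gradw i u), gradw i u⟫ := Finset.sum_nonneg fun i _ => h1 i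
  have hs2 : (0:ℝ) ≤ ∑ i, (hT i)⁻¹ * ⟪jump i u, jump i u⟫ := Finset.sum_nonneg fun i _ => h2 i
  have e1 : ∑ i, ⟪A i (gradw i u), gradw i u⟫ = 0 := by nlinarith
  have e2 : ∑ i, (hT i)⁻¹ * ⟪jump i u, jump i u⟫ = 0 := by nlinarith
  have t1 : ∀ i ∈ Finset.univ, ⟪A i (gradw i u), gradw i u⟫ = 0 :=
    (Finset.sum_eq_zero_iff_of_nonneg (fun i _ => h1 i)).1 e1
  have t2 : ∀ i ∈ Finset.univ, (hT i)⁻¹ * ⟪jump i u, jump i u⟫ = 0 :=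
    (Finset.sum_eq_zero_iff_of_nonneg (fun i _ => h2 i)).1 e2
  refine hrigid u (fun i => ?_) (fun i => ?_)
  · have := hell i (gradw i u)
    rw [t1 i (Finset.mem_univ i)] at this
    have hn : ‖gradw i u‖ ^ 2 ≤ 0 := by nlinarith
    have : ‖gradw i u‖ = 0 := by nlinarith [norm_nonneg (gradw i u)]
    exact norm_eq_zero.1 this
  · have hz : ⟪jump i u, jump i u⟫ = (0:ℝ) := by
      have := t2 i (Finset.mem_univ i)
      have hne : (hT i)⁻¹ ≠ 0 := inv_ne_zero (hTpos i).ne'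
      exact (mul_eq_zero.1 this).resolve_left hne
    exact inner_self_eq_zero.1 hz
end

section
/- Optimal-order H¹ error estimate: under the shape-regularity assumptions A1–A4, if the exact solution of the linear problem -∇·(a∇u) = f satisfies u ∈ H^{k+1}(Ω), then the WG solution u_h satisfies |||u_h - Q_h u||| ≤ C h^k ‖u‖_{k+1}, with C independent of h. -/
/-- Optimal-order `H¹` error estimate: under the shape-regularity
assumptions A1–A4, if the exact solution of the linear problem `-∇·(a∇u) = f`
satisfies `u ∈ H^{k+1}(Ω)`, then the WG solution satisfies
`|||u_h - Q_h u||| ≤ C h^k ‖u‖_{k+1}` with `C` independent of `h`.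

Modeling: `μ` indexes a family of shape-regular meshes with mesh sizes `h m`;
`V m = V_h` with subspace `V0 m = V_h^0`; `as m = 𝔞_s(·,·)` is the stabilized
bilinear form, positive semidefinite, whose diagonal gives the energy norm
`|||v||| = √(𝔞_s(v,v))`; `nu = ‖u‖_{k+1}`; `uh m` is the WG solution and `Qhu m`
the projection `Q_h u`, with `e_h = Q_h u - u_h ∈ V_h^0`.  The hypotheses are the
established ingredients: the error equation (`herr`, Statement 9) with
right-hand-side boundary terms `T1 m v = Σ_T ⟨a(∇u-𝕼_h∇u)·n, v₀-v_b⟩_{∂T}` and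
`T2 m v = s(Q_h u, v)`, and the two boundary estimates (mmm1)–(mmm2) (`hT1`,
`hT2`), with constants uniform over the family (shape regularity A1–A4). -/
theorem WG_H1_error_estimate
    {μ : Type*}
    {V : μ → Type*} [∀ m, AddCommGroup (V m)] [∀ m, Module ℝ (V m)]
    (V0 : ∀ m, Submodule ℝ (V m))
    (as : ∀ m, V m →ₗ[ℝ] V m →ₗ[ℝ] ℝ)
    (hsym : ∀ m (u v : V m), as m u v = as m v u)
    (hpsd : ∀ m (v : V m), 0 ≤ as m v v)
    (h : μ → ℝ) (hpos : ∀ m, 0 < h m) (k : ℕ) (hk : 1 ≤ k)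
    (nu : ℝ) (hnu : 0 ≤ nu)
    (uh Qhu : ∀ m, V m)
    (hmem : ∀ m, Qhu m - uh m ∈ V0 m)
    (T1 T2 : ∀ m, V m → ℝ)
    (herr : ∀ m, ∀ v ∈ V0 m, as m (Qhu m - uh m) v = T1 m v + T2 m v)
    (C1 : ℝ) (hC1 : 0 < C1)
    (hT1 : ∀ m (v : V m), |T1 m v| ≤ C1 * h m ^ k * nu * Real.sqrt (as m v v))
    (C2 : ℝ) (hC2 : 0 < C2)
    (hT2 : ∀ m (v : V m), |T2 m v| ≤ C2 * h m ^ k * nu * Real.sqrt (as m v v)) :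
    ∃ C : ℝ, 0 < C ∧ ∀ m,
      Real.sqrt (as m (uh m - Qhu m) (uh m - Qhu m)) ≤ C * h m ^ k * nu := by
  refine ⟨C1 + C2, by linarith, fun m => ?_⟩
  set e := Qhu m - uh m with he
  have hflip : uh m - Qhu m = -e := by simp [he]
  have hasneg : as m (uh m - Qhu m) (uh m - Qhu m) = as m e e := by
    rw [hflip]; simp
  rw [hasneg]
  set s := Real.sqrt (as m e e) with hs
  have hs0 : 0 ≤ s := Real.sqrt_nonneg _
  have hsq : s * s = as m e e := Real.mul_self_sqrt (hpsd m e)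
  have heq : as m e e = T1 m e + T2 m e := herr m e (hmem m)
  have h1 := hT1 m e
  have h2 := hT2 m e
  have hK : 0 ≤ (C1 + C2) * h m ^ k * nu := by
    have := (hpos m).le
    positivity
  have hbound : s * s ≤ ((C1 + C2) * h m ^ k * nu) * s := by
    rw [hsq, heq]
    have := abs_le.mp h1
    have := abs_le.mp h2
    nlinarith
  rcases eq_or_lt_of_le hs0 with h0 | h0
  · rw [← h0]; exact hK
  · exact le_of_mul_le_mul_right (by linarith [hbound]) h0
end

section
/- Local mass conservation of the WG scheme: let u_h = {u_0, u_b} solve the WG scheme. For each element T, define the numerical flux q_h = -𝕼_h(a∇_w u_h) + ρ h_T^{-1}(u_0 - u_b) n on ∂T. Then ∫_{∂T} q_h · n ds = ∫_T f dT. -/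
local notation "⟪" x ", " y "⟫" => @inner ℝ _ _ x y

/-- Local mass conservation of the WG scheme: if `u_h = {u₀, u_b}`
solves the WG scheme `𝔞_s(u_h; u_h, v) = (f, v₀)` for all `v ∈ V_h^0`, then for
each element `T`, the numerical flux
`q_h = -𝕼_h(a∇_w u_h) + ρ h_T^{-1}(u₀ - u_b) n` on `∂T` satisfies
`∫_{∂T} q_h · n ds = ∫_T f dT`.

Modeling, focusing on one element `T`: `V = V_h`, `V0 = V_h^0`, `v0L2` the
interior component in `L²(Ω)`, `asform = 𝔞_s(u_h; ·, ·)` with the scheme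
`hscheme`; `L2T, L2dT, Bd` model `L²(T), [L²(T)]^d, L²(∂T)`; `G = [P_{k-1}(T)]^d`
with divergence `dvg` and normal trace `ntp`; `oneT, oneB` are the constant
functions `1` on `T` and `∂T` and `indT ∈ L²(Ω)` the indicator of `T` (so
`∫_{∂T} w·n ds = ⟪oneB, ntp w⟫` and `∫_T f = ⟪f, indT⟫`); `aguT = a∇_w u_h|_T`;
`jmpu = (u₀-u_b)|_{∂T}`; `Qp = 𝕼_h` is the `L²(T)` projection onto `G` (`hQmem`,
`hQproj`); `hdiv` is the divergence theorem `∫_T ∇·q = ∫_{∂T} q·n` for `q ∈ G`;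
`vT ∈ V_h^0` is the test function with `v₀ = 1` on `T`, `v₀ = 0` elsewhere and
`v_b = 0`, whose weak gradient on `T` satisfies `(∇_w vT, q)_T = -(1, ∇·q)_T`
(`hgwvT`) and for which `𝔞_s(u_h; u_h, vT)` localizes to `T` (`hloc`). -/
theorem WG_local_mass_conservation
    {V L2 L2T L2dT Bd : Type*}
    [AddCommGroup V] [Module ℝ V]
    [NormedAddCommGroup L2] [InnerProductSpace ℝ L2]
    [NormedAddCommGroup L2T] [InnerProductSpace ℝ L2T]
    [NormedAddCommGroup L2dT] [InnerProductSpace ℝ L2dT]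
    [NormedAddCommGroup Bd] [InnerProductSpace ℝ Bd]
    (V0 : Submodule ℝ V) (v0L2 : V →ₗ[ℝ] L2)
    (f : L2) (u : V) (asform : V → V → ℝ)
    (hscheme : ∀ v ∈ V0, asform u v = ⟪f, v0L2 v⟫)
    (hT ρ : ℝ) (hhT : 0 < hT) (hρ : 0 < ρ)
    (G : Submodule ℝ L2dT) (dvg : L2dT →ₗ[ℝ] L2T) (ntp : L2dT →ₗ[ℝ] Bd)
    (oneT : L2T) (oneB : Bd) (indT : L2)
    (aguT : L2dT) (jmpu : Bd)
    (Qp : L2dT →ₗ[ℝ] L2dT) (hQmem : ∀ x, Qp x ∈ G)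
    (hQproj : ∀ x : L2dT, ∀ q ∈ G, ⟪x, q⟫ = ⟪Qp x, q⟫)
    (hdiv : ∀ q ∈ G, ⟪oneT, dvg q⟫ = ⟪oneB, ntp q⟫)
    (vT : V) (hvT : vT ∈ V0) (gwvT : L2dT) (hgwvTG : gwvT ∈ G)
    (hgwvT : ∀ q ∈ G, ⟪gwvT, q⟫ = -⟪oneT, dvg q⟫)
    (hloc : asform u vT = ⟪aguT, gwvT⟫ + ρ * hT⁻¹ * ⟪jmpu, oneB⟫)
    (hfT : ⟪f, v0L2 vT⟫ = ⟪f, indT⟫) :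
    ⟪oneB, ntp (-(Qp aguT))⟫ + ρ * hT⁻¹ * ⟪jmpu, oneB⟫ = ⟪f, indT⟫ := by
  have h1 : ⟪oneB, ntp (-(Qp aguT))⟫ = ⟪aguT, gwvT⟫ := by
    rw [map_neg, inner_neg_right, ← hdiv _ (hQmem aguT),
      ← neg_neg (⟪oneT, dvg (Qp aguT)⟫), ← hgwvT _ (hQmem aguT), neg_neg,
      real_inner_comm, ← hQproj aguT gwvT hgwvTG]
  rw [h1, ← hloc, hscheme vT hvT, hfT]
end

section
/- Elementwise integration-by-parts identity for the WG bilinear form: for any φ ∈ H²(T) (or φ whose gradient has a well-defined normal trace) and any v = {v_0, v_b} ∈ W_k(T), (a ∇_w Q_h φ, ∇_w v)_T = (a∇φ, ∇v_0)_T − ⟨(a 𝕼_h ∇φ)·n, v_0 − v_b⟩_{∂T}, where a is a constant symmetric matrix on T. -/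
local notation "⟪" x ", " y "⟫" => @inner ℝ _ _ x y

/-! The commuting property `∇_w Q_h φ = 𝕼_h ∇φ` holds because, tested against `q ∈ G`, the
projections `Q₀`, `Q_b` can be dropped (`∇·q ∈ P_k(T)`, `q·n ∈ P_k(∂T)`) and what remains is
integration by parts for `φ`. Testing `∇_w v` against `q = a 𝕼_h ∇φ ∈ G` and integrating by
parts for `v₀` then gives `(∇v₀, a 𝕼_h ∇φ) - ⟨v₀ - v_b, q·n⟩`, and the projection `𝕼_h` can be
dropped in `(∇v₀, a 𝕼_h ∇φ) = (a ∇v₀, 𝕼_h ∇φ)` because `a ∇v₀ ∈ G`. -/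

section

variable {E : Type*} [NormedAddCommGroup E] [InnerProductSpace ℝ E]

theorem Submodule.real_inner_orthogonalProjectionOnto_of_mem (K : Submodule ℝ E)
    [K.HasOrthogonalProjection] (v : E) {w : E} (hw : w ∈ K) :
    ⟪(K.orthogonalProjectionOnto v : E), w⟫ = ⟪v, w⟫ :=
  K.inner_orthogonalProjectionOnto_eq_of_mem_right ⟨w, hw⟩ v

theorem Submodule.real_inner_map_orthogonalProjectionOnto_of_isSymmetric (K : Submodule ℝ E)
    [K.HasOrthogonalProjection] {a : E →ₗ[ℝ] E} (hasym : a.IsSymmetric)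
    (haK : ∀ q ∈ K, a q ∈ K) (v : E) {g : E} (hg : g ∈ K) :
    ⟪g, a (K.orthogonalProjectionOnto v : E)⟫ = ⟪a v, g⟫ := by
  rw [← hasym, real_inner_comm, K.real_inner_orthogonalProjectionOnto_of_mem v (haK g hg),
    hasym, real_inner_comm]

end

section WeakGradient

variable {L2T L2dT BdT : Type*}
  [NormedAddCommGroup L2T] [InnerProductSpace ℝ L2T]
  [NormedAddCommGroup L2dT] [InnerProductSpace ℝ L2dT]
  [NormedAddCommGroup BdT] [InnerProductSpace ℝ BdT]
  {G : Submodule ℝ L2dT} {dvg : L2dT →ₗ[ℝ] L2T} {ntr : L2dT →ₗ[ℝ] BdT}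

theorem weakGrad_projection_eq_orthogonalProjectionOnto_grad
    {Pk : Submodule ℝ L2T} {PkB : Submodule ℝ BdT}
    [Pk.HasOrthogonalProjection] [PkB.HasOrthogonalProjection] [G.HasOrthogonalProjection]
    (hdvg : ∀ q ∈ G, dvg q ∈ Pk) (hntr : ∀ q ∈ G, ntr q ∈ PkB)
    {φ0 : L2T} {φb : BdT} {gradφ : L2dT}
    (hibpφ : ∀ q ∈ G, ⟪gradφ, q⟫ = -⟪φ0, dvg q⟫ + ⟪φb, ntr q⟫)
    {gwQ : L2dT} (hgwQG : gwQ ∈ G)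
    (hgwQ : ∀ q ∈ G, ⟪gwQ, q⟫ =
      -⟪(Pk.orthogonalProjectionOnto φ0 : L2T), dvg q⟫
        + ⟪(PkB.orthogonalProjectionOnto φb : BdT), ntr q⟫) :
    gwQ = G.orthogonalProjectionOnto gradφ := by
  rw [← Submodule.starProjection_apply]
  refine (Submodule.eq_starProjection_of_mem_of_inner_eq_zero hgwQG fun q hq => ?_).symm
  rw [inner_sub_left, hibpφ q hq, hgwQ q hq,
    Pk.real_inner_orthogonalProjectionOnto_of_mem φ0 (hdvg q hq),
    PkB.real_inner_orthogonalProjectionOnto_of_mem φb (hntr q hq), sub_self]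

theorem inner_weakGrad_eq_inner_grad_sub_inner_jump
    {v0 : L2T} {vb trv0 : BdT} {gradv0 gwv : L2dT}
    (hibpv : ∀ q ∈ G, ⟪gradv0, q⟫ = -⟪v0, dvg q⟫ + ⟪trv0, ntr q⟫)
    (hgwv : ∀ q ∈ G, ⟪gwv, q⟫ = -⟪v0, dvg q⟫ + ⟪vb, ntr q⟫) {q : L2dT} (hq : q ∈ G) :
    ⟪gwv, q⟫ = ⟪gradv0, q⟫ - ⟪ntr q, trv0 - vb⟫ := by
  rw [hgwv q hq, hibpv q hq, inner_sub_right, real_inner_comm trv0, real_inner_comm vb]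
  ring

end WeakGradient

theorem WG_elementwise_integration_by_parts_general
    {L2T L2dT BdT : Type*}
    [NormedAddCommGroup L2T] [InnerProductSpace ℝ L2T]
    [NormedAddCommGroup L2dT] [InnerProductSpace ℝ L2dT]
    [NormedAddCommGroup BdT] [InnerProductSpace ℝ BdT]
    (Pk : Submodule ℝ L2T) (PkB : Submodule ℝ BdT) (G : Submodule ℝ L2dT)
    [Submodule.HasOrthogonalProjection Pk] [Submodule.HasOrthogonalProjection PkB]
    [Submodule.HasOrthogonalProjection G]
    (dvg : L2dT →ₗ[ℝ] L2T) (ntr : L2dT →ₗ[ℝ] BdT)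
    (hdvg : ∀ q ∈ G, dvg q ∈ Pk) (hntr : ∀ q ∈ G, ntr q ∈ PkB)
    (a : L2dT →ₗ[ℝ] L2dT)
    (hasym : ∀ x y : L2dT, ⟪a x, y⟫ = ⟪x, a y⟫)
    (haG : ∀ q ∈ G, a q ∈ G)
    (φ0 : L2T) (φb : BdT) (gradφ : L2dT)
    (hibpφ : ∀ q ∈ G, ⟪gradφ, q⟫ = -⟪φ0, dvg q⟫ + ⟪φb, ntr q⟫)
    (v0 : L2T) (vb : BdT)
    (gradv0 : L2dT) (hgv0G : gradv0 ∈ G) (trv0 : BdT)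
    (hibpv : ∀ q ∈ G, ⟪gradv0, q⟫ = -⟪v0, dvg q⟫ + ⟪trv0, ntr q⟫)
    (gwQ : L2dT) (hgwQG : gwQ ∈ G)
    (hgwQ : ∀ q ∈ G, ⟪gwQ, q⟫ =
      -⟪(Submodule.orthogonalProjectionOnto Pk φ0 : L2T), dvg q⟫
        + ⟪(Submodule.orthogonalProjectionOnto PkB φb : BdT), ntr q⟫)
    (gwv : L2dT)
    (hgwv : ∀ q ∈ G, ⟪gwv, q⟫ = -⟪v0, dvg q⟫ + ⟪vb, ntr q⟫) :
    ⟪a gwQ, gwv⟫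
      = ⟪a gradφ, gradv0⟫
        - ⟪ntr (a (Submodule.orthogonalProjectionOnto G gradφ : L2dT)), trv0 - vb⟫ := by
  have hprojG : (G.orthogonalProjectionOnto gradφ : L2dT) ∈ G := Submodule.coe_mem _
  rw [weakGrad_projection_eq_orthogonalProjectionOnto_grad hdvg hntr hibpφ hgwQG hgwQ,
    real_inner_comm, inner_weakGrad_eq_inner_grad_sub_inner_jump hibpv hgwv (haG _ hprojG),
    G.real_inner_map_orthogonalProjectionOnto_of_isSymmetric hasym haG gradφ hgv0G]

/-- Elementwise integration-by-parts identity for the WG bilinear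
form: for any `φ ∈ H²(T)` and any `v = {v₀, v_b} ∈ W_k(T)`,
`(a ∇_w Q_h φ, ∇_w v)_T = (a∇φ, ∇v₀)_T − ⟨(a 𝕼_h ∇φ)·n, v₀ − v_b⟩_{∂T}`,
where `a` is a constant symmetric matrix on `T`.

Modeling on the element `T`: `L2T, L2dT, BdT` model `L²(T), [L²(T)]^d, L²(∂T)`;
`Pk = P_k(T)`, `PkB` the piecewise-`P_k` boundary space, `G = [P_{k-1}(T)]^d`;
`dvg, ntr` are divergence and normal trace, mapping `G` into `Pk`, `PkB`
(`hdvg`, `hntr`); `a` is symmetric (`hasym`) and, being a constant matrix, maps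
`G` into itself (`haG`); `φ0 = φ|_T`, `φb = φ|_{∂T}`, `gradφ = ∇φ`, with
integration by parts `hibpφ`; `v₀ ∈ P_k(T)` with gradient
`gradv0 = ∇v₀ ∈ [P_{k-1}(T)]^d` (`hgv0G`), trace `trv0 = v₀|_{∂T}`, and
integration by parts `hibpv`; `gwQ = ∇_w Q_hφ` and `gwv = ∇_w v` are the discrete
weak gradients, characterized by `hgwQ` and `hgwv`, where
`Q₀ = orthogonalProjection Pk`, `Q_b = orthogonalProjection PkB`,
`𝕼_h = orthogonalProjection G`. -/
theorem WG_elementwise_integration_by_parts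
    {L2T L2dT BdT : Type*}
    [NormedAddCommGroup L2T] [InnerProductSpace ℝ L2T]
    [NormedAddCommGroup L2dT] [InnerProductSpace ℝ L2dT]
    [NormedAddCommGroup BdT] [InnerProductSpace ℝ BdT]
    (Pk : Submodule ℝ L2T) (PkB : Submodule ℝ BdT) (G : Submodule ℝ L2dT)
    [Submodule.HasOrthogonalProjection Pk] [Submodule.HasOrthogonalProjection PkB]
    [Submodule.HasOrthogonalProjection G]
    (dvg : L2dT →ₗ[ℝ] L2T) (ntr : L2dT →ₗ[ℝ] BdT)
    (hdvg : ∀ q ∈ G, dvg q ∈ Pk) (hntr : ∀ q ∈ G, ntr q ∈ PkB)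
    (a : L2dT →ₗ[ℝ] L2dT)
    (hasym : ∀ x y : L2dT, ⟪a x, y⟫ = ⟪x, a y⟫)
    (haG : ∀ q ∈ G, a q ∈ G)
    (φ0 : L2T) (φb : BdT) (gradφ : L2dT)
    (hibpφ : ∀ q ∈ G, ⟪gradφ, q⟫ = -⟪φ0, dvg q⟫ + ⟪φb, ntr q⟫)
    (v0 : L2T) (hv0 : v0 ∈ Pk) (vb : BdT) (hvb : vb ∈ PkB)
    (gradv0 : L2dT) (hgv0G : gradv0 ∈ G) (trv0 : BdT)
    (hibpv : ∀ q ∈ G, ⟪gradv0, q⟫ = -⟪v0, dvg q⟫ + ⟪trv0, ntr q⟫)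
    (gwQ : L2dT) (hgwQG : gwQ ∈ G)
    (hgwQ : ∀ q ∈ G, ⟪gwQ, q⟫ =
      -⟪(Submodule.orthogonalProjectionOnto Pk φ0 : L2T), dvg q⟫
        + ⟪(Submodule.orthogonalProjectionOnto PkB φb : BdT), ntr q⟫)
    (gwv : L2dT) (hgwvG : gwv ∈ G)
    (hgwv : ∀ q ∈ G, ⟪gwv, q⟫ = -⟪v0, dvg q⟫ + ⟪vb, ntr q⟫) :
    ⟪a gwQ, gwv⟫
      = ⟪a gradφ, gradv0⟫
        - ⟪ntr (a (Submodule.orthogonalProjectionOnto G gradφ : L2dT)), trv0 - vb⟫ :=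
  WG_elementwise_integration_by_parts_general Pk PkB G dvg ntr hdvg hntr a hasym haG φ0 φb gradφ
    hibpφ v0 vb gradv0 hgv0G trv0 hibpv gwQ hgwQG hgwQ gwv hgwv
end
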